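/- Let β be a real 3×3 matrix and S, P ∈ ℝ³. The following are equivalent: (i) there exist O₁, O₂ ∈ SO(3) such that β' = O₁βO₂ᵀ satisfies β'_{01} = β'_{10} = β'_{12} = β'_{21} = 0 and (O₁S)_1 = 0 and (O₂P)_1 = 0 (the conditions for the associated two-qubit Hamiltonian to be real); (ii) there exist O₁, O₂ ∈ SO(3) such that O₁βO₂ᵀ is a diagonal matrix and (O₁S)_1 = 0 and (O₂P)_1 = 0. -/
import Mathlib
open Matrix

/-- `O` is a real 3×3 special orthogonal matrix. -/
def IsSO3 (O : Matrix (Fin 3) (Fin 3) ℝ) : Prop := O * Oᵀ = 1 ∧ O.det = 1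

/-- rotation in the (0,2) plane -/
def rot02 (x y : ℝ) : Matrix (Fin 3) (Fin 3) ℝ := !![x, 0, -y; 0, 1, 0; y, 0, x]

lemma rot02_isSO3 {x y : ℝ} (h : x^2 + y^2 = 1) : IsSO3 (rot02 x y) := by
  have ht : (rot02 x y)ᵀ = !![x, 0, y; 0, 1, 0; -y, 0, x] := by
    ext i j; fin_cases i <;> fin_cases j <;> rfl
  constructor
  · rw [ht]
    ext i j
    fin_cases i <;> fin_cases j <;>
      simp [rot02, Matrix.mul_apply, Fin.sum_univ_three, Matrix.one_apply] <;>
      nlinarith [h]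
  · simp [rot02, Matrix.det_fin_three]
    nlinarith [h]

lemma isSO3_mul {A B : Matrix (Fin 3) (Fin 3) ℝ} (hA : IsSO3 A) (hB : IsSO3 B) :
    IsSO3 (A * B) := by
  refine ⟨?_, by rw [Matrix.det_mul, hA.2, hB.2, one_mul]⟩
  rw [Matrix.transpose_mul, Matrix.mul_assoc, ← Matrix.mul_assoc B, hB.1, Matrix.one_mul, hA.1]

lemma rot02_mulVec (x y : ℝ) (w : Fin 3 → ℝ) : (rot02 x y *ᵥ w) 1 = w 1 := by
  simp [rot02, Matrix.mulVec, dotProduct, Fin.sum_univ_three]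

lemma symmetrize (a b c d : ℝ) : ∃ x y : ℝ, x^2 + y^2 = 1 ∧ x*b - y*d = y*a + x*c := by
  by_cases h : a + d = 0 ∧ b - c = 0
  · exact ⟨1, 0, by norm_num, by nlinarith [h.1, h.2]⟩
  · have hr : (a+d)^2 + (b-c)^2 > 0 := by
      rcases not_and_or.mp h with h' | h' <;> positivity
    set r := Real.sqrt ((a+d)^2 + (b-c)^2) with hrdef
    have hr0 : r > 0 := Real.sqrt_pos.mpr hr
    have hr2 : r^2 = (a+d)^2 + (b-c)^2 := Real.sq_sqrt (le_of_lt hr)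
    refine ⟨(a+d)/r, (b-c)/r, ?_, ?_⟩
    · field_simp
      linarith [hr2]
    · field_simp
      ring
  
lemma diag_sym (p q s : ℝ) : ∃ u v : ℝ, u^2 + v^2 = 1 ∧ u*v*(p-s) + q*(u^2 - v^2) = 0 := by
  by_cases hq : q = 0
  · exact ⟨1, 0, by norm_num, by simp [hq]⟩
  · set D := Real.sqrt ((p-s)^2 + 4*q^2) with hDdef
    have hD2 : D^2 = (p-s)^2 + 4*q^2 := Real.sq_sqrt (by positivity)
    set l := (p + s + D)/2 with hldef
    have hchar : l^2 - (p+s)*l + p*s - q^2 = 0 := by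
      rw [hldef]; ring_nf; nlinarith [hD2]
    have hn : q^2 + (p-l)^2 > 0 := by positivity
    set n := Real.sqrt (q^2 + (p-l)^2) with hndef
    have hn0 : n > 0 := Real.sqrt_pos.mpr hn
    have hn2 : n^2 = q^2 + (p-l)^2 := Real.sq_sqrt (le_of_lt hn)
    refine ⟨q/n, (p-l)/n, ?_, ?_⟩
    · field_simp
      linarith [hn2]
    · have key : q*(p-l)*(p-s) + q*(q^2 - (p-l)^2) = 0 := by linear_combination (-q) * hchar
      field_simp
      nlinarith [key]

lemma svd2 (a b c d : ℝ) : ∃ x y u v : ℝ, x^2 + y^2 = 1 ∧ u^2 + v^2 = 1 ∧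
    v*(x*a - y*c) + u*(x*b - y*d) = 0 ∧ u*(y*a + x*c) - v*(y*b + x*d) = 0 := by
  obtain ⟨x0, y0, hx0, hsym⟩ := symmetrize a b c d
  obtain ⟨u, v, huv, hdiag⟩ := diag_sym (x0*a - y0*c) (x0*b - y0*d) (y0*b + x0*d)
  refine ⟨u*x0 - v*y0, u*y0 + v*x0, u, v, by nlinarith [hx0, huv], huv, ?_, ?_⟩
  · linear_combination hdiag + v^2 * hsym
  · linear_combination hdiag - u^2 * hsym

theorem real_under_rotations_iff_real_with_diagonal_beta
    (β : Matrix (Fin 3) (Fin 3) ℝ) (S P : Fin 3 → ℝ) :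
    (∃ O₁ O₂ : Matrix (Fin 3) (Fin 3) ℝ, IsSO3 O₁ ∧ IsSO3 O₂ ∧
      (O₁ * β * O₂ᵀ) 0 1 = 0 ∧ (O₁ * β * O₂ᵀ) 1 0 = 0 ∧
      (O₁ * β * O₂ᵀ) 1 2 = 0 ∧ (O₁ * β * O₂ᵀ) 2 1 = 0 ∧
      (O₁ *ᵥ S) 1 = 0 ∧ (O₂ *ᵥ P) 1 = 0) ↔
    (∃ O₁ O₂ : Matrix (Fin 3) (Fin 3) ℝ, IsSO3 O₁ ∧ IsSO3 O₂ ∧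
      (∃ d : Fin 3 → ℝ, O₁ * β * O₂ᵀ = Matrix.diagonal d) ∧
      (O₁ *ᵥ S) 1 = 0 ∧ (O₂ *ᵥ P) 1 = 0) := by
  constructor
  · rintro ⟨O₁, O₂, h1, h2, e01, e10, e12, e21, hS, hP⟩
    set M := O₁ * β * O₂ᵀ with hM
    obtain ⟨x, y, u, v, hxy, huv, g1, g2⟩ := svd2 (M 0 0) (M 0 2) (M 2 0) (M 2 2)
    refine ⟨rot02 x y * O₁, rot02 u v * O₂, isSO3_mul (rot02_isSO3 hxy) h1,
      isSO3_mul (rot02_isSO3 huv) h2, ?_, ?_, ?_⟩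
    · have ht : (rot02 u v)ᵀ = !![u, 0, v; 0, 1, 0; -v, 0, u] := by
        ext i j; fin_cases i <;> fin_cases j <;> rfl
      have hEq : rot02 x y * O₁ * β * (rot02 u v * O₂)ᵀ = rot02 x y * M * (rot02 u v)ᵀ := by
        rw [hM, Matrix.transpose_mul]
        simp only [Matrix.mul_assoc]
      refine ⟨fun i => (rot02 x y * M * (rot02 u v)ᵀ) i i, ?_⟩
      rw [hEq, ht]
      ext i j
      fin_cases i <;> fin_cases j <;>
        simp [rot02, Matrix.mul_apply, Matrix.vecMul, dotProduct, Fin.sum_univ_three, Matrix.diagonal, e01, e10, e12, e21] <;>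
        first | linear_combination g1 | linear_combination g2
    · rw [← Matrix.mulVec_mulVec, rot02_mulVec, hS]
    · rw [← Matrix.mulVec_mulVec, rot02_mulVec, hP]
  · rintro ⟨O₁, O₂, h1, h2, ⟨d, hd⟩, hS, hP⟩
    exact ⟨O₁, O₂, h1, h2, by rw [hd]; simp [Matrix.diagonal_apply_ne],
      by rw [hd]; simp [Matrix.diagonal_apply_ne], by rw [hd]; simp [Matrix.diagonal_apply_ne],
      by rw [hd]; simp [Matrix.diagonal_apply_ne], hS, hP⟩
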